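/- arXiv:1101.3088 — 3 statements merged into one kernel-verified Lean document; each statement's English description precedes it below -/
import Mathlib

section
/- Let N be an admissible algebra (a finite-dimensional commutative nilpotent algebra over F, char 0, with 1-dimensional annihilator). Then the set Π(N) of admissible projections (projections π ∈ End(N) with range Ann(N)) is an affine subspace of End(N) of dimension dim(N/Ann(N)), and the map (x + Ann(N), π) ↦ π ∘ M_{exp x} defines a simply transitive action of the vector group N/Ann(N) on Π(N), where M_e(y) = e·y denotes multiplication by e = exp(x) in the unital extension N⁰. -/
/-- `pw F N k` is the characteristic ideal `N^k`. -/
def pw (F N : Type*) [Field F] [NonUnitalNonAssocRing N] [Module F N] : ℕ → Submodule F N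
  | 0 => ⊤
  | 1 => ⊤
  | (k+2) => Submodule.span F {z : N | ∃ x : N, ∃ y ∈ pw F N (k+1), z = x * y}

/-- The annihilator `Ann(N) = {x | x·N = 0}` of a commutative algebra `N`. -/
def annSub (F N : Type*) [Field F] [NonUnitalCommRing N] [Module F N]
    [SMulCommClass F N N] [IsScalarTower F N N] : Submodule F N where
  carrier := {x | ∀ y : N, x * y = 0}
  add_mem' := by intro a b ha hb y; simp [add_mul, ha y, hb y]
  zero_mem' := by intro y; simp
  smul_mem' := by intro c x hx y; rw [smul_mul_assoc, hx y, smul_zero]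

/-- `npw x k = x^(k+1)` in a non-unital ring. -/
def npw {N : Type*} [Mul N] (x : N) : ℕ → N
  | 0 => x
  | (k+1) => x * npw x k

/-- The truncated exponential `exp₁ x = Σ_{k=1}^{m} x^k/k!`. -/
noncomputable def exp1 (F : Type*) {N : Type*} [Field F] [NonUnitalNonAssocRing N]
    [Module F N] (m : ℕ) (x : N) : N :=
  ∑ k ∈ Finset.range m, ((Nat.factorial (k + 1) : F))⁻¹ • npw x k

/-- An admissible projection: a projection of `N` onto the annihilator `Ann(N)`. -/
def IsAdmProj (F N : Type*) [Field F] [NonUnitalCommRing N] [Module F N]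
    [SMulCommClass F N N] [IsScalarTower F N N] (π : N →ₗ[F] N) : Prop :=
  π ∘ₗ π = π ∧ LinearMap.range π = annSub F N

/-- `actProj F ν x π = π ∘ M_{exp x}`, the action of `x ∈ N` on projections; indeed
`M_{exp x}(y) = (1 + exp₁ x)·y = y + (exp₁ x)·y` in the unital extension `N⁰`. -/
noncomputable def actProj (F : Type*) {N : Type*} [Field F] [NonUnitalCommRing N]
    [Module F N] [SMulCommClass F N N] [IsScalarTower F N N]
    (ν : ℕ) (x : N) (π : N →ₗ[F] N) : N →ₗ[F] N :=
  π + π ∘ₗ LinearMap.mul F N (exp1 F ν x)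

/-!
Since `Ann(N)` is a line, a projection onto it is `z ↦ λ(z)·a₀` for a functional `λ`, and two
admissible projections differ by a map `N → Ann(N)` vanishing on `Ann(N)`. The bilinear form
`(v, z) ↦ λ(v z)` has left radical exactly `Ann(N)`: if `π(v·N) = 0`, descending through the
powers `N^k` shows `v·N^k ⊆ Ann(N) ∩ ker π = 0`. Counting dimensions, every such difference map
is `z ↦ π(w z)`, so every admissible projection is `π ∘ M_{1+w}`. Finally `exp₁` is a bijection
of `N` modulo `Ann(N)`: `exp₁ x - exp₁ y = (1 + W)(x - y)` with `1 + W` invertible in `N⁰`, and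
`exp₁` is surjective by successive approximation along the powers of `N`.
-/

theorem Submodule.range_eq_dualAnnihilator_of_ker_eq {K V : Type*} [Field K] [AddCommGroup V]
    [Module K V] [FiniteDimensional K V] {S : Submodule K V} (B : V →ₗ[K] Module.Dual K V)
    (hker : LinearMap.ker B = S) (hrange : LinearMap.range B ≤ S.dualAnnihilator) :
    LinearMap.range B = S.dualAnnihilator := by
  refine Submodule.eq_of_le_of_finrank_eq hrange ?_
  have hrank := LinearMap.finrank_range_add_finrank_ker B
  have hdual := Subspace.finrank_add_finrank_dualAnnihilator_eq S
  rw [hker] at hrank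
  omega

section Powers

variable {F N : Type*} [Field F] [NonUnitalNonAssocRing N] [Module F N]

theorem mul_mem_pw {k : ℕ} {u : N} (hu : u ∈ pw F N k) (z : N) : z * u ∈ pw F N (k + 1) := by
  cases k with
  | zero => trivial
  | succ k => exact Submodule.subset_span ⟨z, u, hu, rfl⟩

theorem eq_zero_of_eq_mul {ν : ℕ} (hnil : pw F N (ν + 1) = ⊥) {c : N} (W : N)
    (hc : c = W * c) : c = 0 := by
  have hmem : ∀ n, c ∈ pw F N n := by
    intro n
    induction n with
    | zero => trivial
    | succ n ih => rw [hc]; exact mul_mem_pw ih W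
  simpa [hnil] using hmem (ν + 1)

theorem exp1_succ (m : ℕ) (x : N) :
    exp1 F (m + 1) x = exp1 F m x + ((m + 1).factorial : F)⁻¹ • npw x m :=
  Finset.sum_range_succ _ _

end Powers

section Exponential

variable {F N : Type*} [Field F] [NonUnitalCommRing N] [Module F N] [IsScalarTower F N N]

theorem npw_sub_npw (x y : N) (j : ℕ) :
    ∃ w : N, npw x (j + 1) - npw y (j + 1) = w * (x - y) := by
  induction j with
  | zero =>
    refine ⟨x + y, ?_⟩
    simp only [npw, add_mul, mul_sub, mul_comm y x]
    abel
  | succ j ih =>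
    obtain ⟨w, hw⟩ := ih
    refine ⟨x * w + npw y (j + 1), ?_⟩
    have hx : npw x (j + 1) = npw y (j + 1) + w * (x - y) := by rw [← hw]; abel
    change x * npw x (j + 1) - y * npw y (j + 1) = _
    rw [hx, mul_add, add_mul, mul_assoc, mul_comm (npw y (j + 1)) (x - y), sub_mul]
    abel

theorem exp1_sub_exp1 (m : ℕ) (x y : N) :
    ∃ W : N, exp1 F (m + 1) x - exp1 F (m + 1) y = (x - y) + W * (x - y) := by
  induction m with
  | zero => exact ⟨0, by simp [exp1, npw]⟩
  | succ m ih =>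
    obtain ⟨W, hW⟩ := ih
    obtain ⟨w, hw⟩ := npw_sub_npw x y m
    refine ⟨W + ((m + 1 + 1).factorial : F)⁻¹ • w, ?_⟩
    rw [exp1_succ, exp1_succ (m + 1) y, add_sub_add_comm, hW, ← smul_sub, hw, add_mul,
      smul_mul_assoc, add_assoc]

theorem exp1_surjective {m : ℕ} (hnil : pw F N (m + 1 + 1) = ⊥) :
    Function.Surjective (exp1 F (N := N) (m + 1)) := by
  intro w
  have happrox : ∀ k, ∃ x, w - exp1 F (m + 1) x ∈ pw F N (k + 1) := by
    intro k
    induction k with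
    | zero => exact ⟨0, trivial⟩
    | succ k ih =>
      obtain ⟨x, hx⟩ := ih
      set r := w - exp1 F (m + 1) x with hr
      obtain ⟨W, hW⟩ := exp1_sub_exp1 (F := F) m (x + r) x
      rw [add_sub_cancel_left] at hW
      refine ⟨x + r, ?_⟩
      -- correcting `x` by the residual `r ∈ N^(k+1)` leaves the residual `-W r ∈ N^(k+2)`
      have hres : w - exp1 F (m + 1) (x + r) = -(W * r) :=
        calc w - exp1 F (m + 1) (x + r) = r - (exp1 F (m + 1) (x + r) - exp1 F (m + 1) x) := by
              rw [hr]; abel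
          _ = -(W * r) := by rw [hW]; abel
      rw [hres]
      exact neg_mem (mul_mem_pw hx W)
  obtain ⟨x, hx⟩ := happrox (m + 1)
  exact ⟨x, (sub_eq_zero.1 (by simpa [hnil] using hx)).symm⟩

end Exponential

section AdmissibleAlgebra

variable {F N : Type*} [Field F] [NonUnitalCommRing N] [Module F N]
  [SMulCommClass F N N] [IsScalarTower F N N]

theorem IsAdmProj.apply_mem {π : N →ₗ[F] N} (hπ : IsAdmProj F N π) (z : N) :
    π z ∈ annSub F N :=
  hπ.2 ▸ LinearMap.mem_range_self π z

theorem IsAdmProj.apply_of_mem {π : N →ₗ[F] N} (hπ : IsAdmProj F N π) {a : N}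
    (ha : a ∈ annSub F N) : π a = a := by
  obtain ⟨b, rfl⟩ := hπ.2.symm ▸ ha
  exact LinearMap.congr_fun hπ.1 b

theorem isAdmProj_iff {π : N →ₗ[F] N} :
    IsAdmProj F N π ↔ (∀ z, π z ∈ annSub F N) ∧ ∀ a ∈ annSub F N, π a = a := by
  refine ⟨fun hπ => ⟨hπ.apply_mem, fun a => hπ.apply_of_mem⟩,
    fun ⟨hmem, hfix⟩ => ⟨?_, ?_⟩⟩
  · exact LinearMap.ext fun z => hfix _ (hmem z)
  · refine le_antisymm ?_ fun a ha => ⟨a, hfix a ha⟩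
    rintro _ ⟨z, rfl⟩
    exact hmem z

theorem isAdmProj_smul_add_smul {π ρ : N →ₗ[F] N} (hπ : IsAdmProj F N π)
    (hρ : IsAdmProj F N ρ) (t : F) : IsAdmProj F N (t • π + (1 - t) • ρ) := by
  refine isAdmProj_iff.2 ⟨fun z => ?_, fun a ha => ?_⟩
  · exact add_mem (Submodule.smul_mem _ _ (hπ.apply_mem z))
      (Submodule.smul_mem _ _ (hρ.apply_mem z))
  · simp only [LinearMap.add_apply, LinearMap.smul_apply, hπ.apply_of_mem ha,
      hρ.apply_of_mem ha, ← add_smul, add_sub_cancel, one_smul]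

theorem mem_annSub_of_forall_proj_mul_eq_zero {π : N →ₗ[F] N} (hπ : IsAdmProj F N π)
    {ν : ℕ} (hnil : pw F N (ν + 1) = ⊥) {v : N} (h : ∀ z, π (v * z) = 0) :
    v ∈ annSub F N := by
  have hdesc : ∀ i ≤ ν, ∀ u ∈ pw F N (ν + 1 - i), v * u = 0 := by
    intro i
    induction i with
    | zero =>
      intro _ u hu
      rw [Nat.sub_zero, hnil, Submodule.mem_bot] at hu
      rw [hu, mul_zero]
    | succ i ih =>
      intro hi u hu
      have hindex : ν + 1 - (i + 1) + 1 = ν + 1 - i := by omega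
      have hvu : v * u ∈ annSub F N := fun z => by
        rw [mul_assoc, mul_comm u z]
        exact ih (by omega) _ (hindex ▸ mul_mem_pw hu z)
      rw [← hπ.apply_of_mem hvu, h]
  exact fun y => hdesc ν le_rfl y (by rw [Nat.add_sub_cancel_left]; trivial)

theorem actProj_apply (ν : ℕ) (x : N) (π : N →ₗ[F] N) (z : N) :
    actProj F ν x π z = π z + π (exp1 F ν x * z) :=
  rfl

theorem isAdmProj_actProj {π : N →ₗ[F] N} (hπ : IsAdmProj F N π) (ν : ℕ) (x : N) :
    IsAdmProj F N (actProj F ν x π) := by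
  refine isAdmProj_iff.2 ⟨fun z => ?_, fun a ha => ?_⟩
  · exact add_mem (hπ.apply_mem z) (hπ.apply_mem _)
  · rw [actProj_apply, mul_comm, ha, map_zero, add_zero, hπ.apply_of_mem ha]

theorem actProj_eq_of_sub_mem (m : ℕ) {x y : N} (h : x - y ∈ annSub F N) (π : N →ₗ[F] N) :
    actProj F (m + 1) x π = actProj F (m + 1) y π := by
  obtain ⟨W, hW⟩ := exp1_sub_exp1 (F := F) m x y
  have hexp : exp1 F (m + 1) x - exp1 F (m + 1) y = x - y := by
    rw [hW, mul_comm, show (x - y) * W = 0 from h W, add_zero]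
  ext z
  have hz : (exp1 F (m + 1) x - exp1 F (m + 1) y) * z = 0 := hexp ▸ h z
  rw [sub_mul, sub_eq_zero] at hz
  rw [actProj_apply, actProj_apply, hz]

theorem sub_mem_of_actProj_eq {π : N →ₗ[F] N} (hπ : IsAdmProj F N π) {m : ℕ}
    (hnil : pw F N (m + 1 + 1) = ⊥) {x y : N}
    (h : actProj F (m + 1) x π = actProj F (m + 1) y π) : x - y ∈ annSub F N := by
  have hexp : exp1 F (m + 1) x - exp1 F (m + 1) y ∈ annSub F N := by
    refine mem_annSub_of_forall_proj_mul_eq_zero hπ hnil fun z => ?_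
    have hz := LinearMap.congr_fun h z
    rw [actProj_apply, actProj_apply, add_right_inj] at hz
    rw [sub_mul, map_sub, hz, sub_self]
  obtain ⟨W, hW⟩ := exp1_sub_exp1 (F := F) m x y
  intro z
  refine eq_zero_of_eq_mul hnil (-W) ?_
  have hz : ((x - y) + W * (x - y)) * z = 0 := hW ▸ hexp z
  rw [add_mul, mul_assoc, add_eq_zero_iff_eq_neg] at hz
  rwa [neg_mul]

variable [FiniteDimensional F N]

theorem exists_proj_mul_eq (hAnn : Module.finrank F (annSub F N) = 1) {π : N →ₗ[F] N}
    (hπ : IsAdmProj F N π) {ν : ℕ} (hnil : pw F N (ν + 1) = ⊥) (δ : N →ₗ[F] N)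
    (hδ : ∀ z, δ z ∈ annSub F N) (hδ_ann : ∀ a ∈ annSub F N, δ a = 0) :
    ∃ w : N, ∀ z, π (w * z) = δ z := by
  let e : annSub F N ≃ₗ[F] F :=
    LinearEquiv.ofFinrankEq _ _ (by rw [hAnn, Module.finrank_self])
  let coordπ : N →ₗ[F] F := e.toLinearMap ∘ₗ LinearMap.codRestrict _ π hπ.apply_mem
  let coordδ : N →ₗ[F] F := e.toLinearMap ∘ₗ LinearMap.codRestrict _ δ hδ
  have hcoordπ : ∀ z, coordπ z = 0 ↔ π z = 0 := fun z => by
    simp [coordπ, ← Submodule.coe_eq_zero]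
  let B : N →ₗ[F] Module.Dual F N := (LinearMap.mul F N).compr₂ coordπ
  have hker : LinearMap.ker B = annSub F N := by
    ext v
    refine ⟨fun hv => mem_annSub_of_forall_proj_mul_eq_zero hπ hnil fun z => ?_,
      fun hv => LinearMap.ext fun z => ?_⟩
    · exact (hcoordπ _).1 (LinearMap.congr_fun hv z)
    · simp [B, hv z]
  have hrange : LinearMap.range B ≤ (annSub F N).dualAnnihilator := by
    rintro _ ⟨v, rfl⟩
    refine (Submodule.mem_dualAnnihilator _).2 fun a ha => ?_
    simp [B, mul_comm v a, ha v]
  have hδ_mem : coordδ ∈ (annSub F N).dualAnnihilator :=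
    (Submodule.mem_dualAnnihilator _).2 fun a ha => by
      simp [coordδ, ← Submodule.coe_eq_zero, hδ_ann a ha]
  rw [← Submodule.range_eq_dualAnnihilator_of_ker_eq B hker hrange] at hδ_mem
  obtain ⟨w, hw⟩ := hδ_mem
  refine ⟨w, fun z => ?_⟩
  have hcoord : coordπ (w * z) = coordδ z := by rw [← hw]; rfl
  simpa [coordπ, coordδ, Subtype.ext_iff] using hcoord

theorem exists_actProj_eq (hAnn : Module.finrank F (annSub F N) = 1) {m : ℕ}
    (hnil : pw F N (m + 1 + 1) = ⊥) {π ρ : N →ₗ[F] N} (hπ : IsAdmProj F N π)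
    (hρ : IsAdmProj F N ρ) : ∃ x : N, actProj F (m + 1) x π = ρ := by
  obtain ⟨w, hw⟩ := exists_proj_mul_eq hAnn hπ hnil (ρ - π)
    (fun z => sub_mem (hρ.apply_mem z) (hπ.apply_mem z))
    (fun a ha => by rw [LinearMap.sub_apply, hρ.apply_of_mem ha, hπ.apply_of_mem ha, sub_self])
  obtain ⟨x, rfl⟩ := exp1_surjective (F := F) hnil w
  refine ⟨x, LinearMap.ext fun z => ?_⟩
  rw [actProj_apply, hw, LinearMap.sub_apply, add_sub_cancel]

end AdmissibleAlgebra

theorem stmt8_general {F N : Type*} [Field F] [NonUnitalCommRing N] [Module F N]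
    [SMulCommClass F N N] [IsScalarTower F N N] [FiniteDimensional F N]
    (hAnn : Module.finrank F (annSub F N) = 1)
    (ν : ℕ) (hnil : pw F N (ν + 1) = ⊥) :
    (∀ π ρ : N →ₗ[F] N, IsAdmProj F N π → IsAdmProj F N ρ → ∀ t : F,
        IsAdmProj F N (t • π + (1 - t) • ρ)) ∧
    (∀ π : N →ₗ[F] N, IsAdmProj F N π → ∀ x : N, IsAdmProj F N (actProj F ν x π)) ∧
    (∀ π : N →ₗ[F] N, IsAdmProj F N π → ∀ x y : N, x - y ∈ annSub F N →
        actProj F ν x π = actProj F ν y π) ∧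
    (∀ π : N →ₗ[F] N, IsAdmProj F N π → ∀ x y : N,
        actProj F ν x π = actProj F ν y π → x - y ∈ annSub F N) ∧
    (∀ π ρ : N →ₗ[F] N, IsAdmProj F N π → IsAdmProj F N ρ →
        ∃ x : N, actProj F ν x π = ρ) := by
  obtain ⟨m, rfl⟩ : ∃ m, ν = m + 1 := by
    refine Nat.exists_eq_add_one.2 (Nat.pos_of_ne_zero ?_)
    rintro rfl
    have hbot : annSub F N = ⊥ := eq_bot_iff.2 ((le_top : annSub F N ≤ pw F N 1).trans_eq hnil)
    rw [hbot, finrank_bot] at hAnn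
    exact zero_ne_one hAnn
  exact ⟨fun π ρ hπ hρ t => isAdmProj_smul_add_smul hπ hρ t,
    fun π hπ x => isAdmProj_actProj hπ _ x,
    fun π _ x y h => actProj_eq_of_sub_mem m h π,
    fun π hπ x y h => sub_mem_of_actProj_eq hπ hnil h,
    fun π ρ hπ hρ => exists_actProj_eq hAnn hnil hπ hρ⟩

/-- For an admissible algebra `N` (finite-dimensional commutative nilpotent,
`dim Ann(N) = 1`), the set `Π(N)` of admissible projections is an affine subspace of
`End(N)` (closed under affine combinations), and `(x + Ann(N), π) ↦ π ∘ M_{exp x}` is a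
well-defined simply transitive action of the vector group `N/Ann(N)` on `Π(N)` — so `Π(N)`
has dimension `dim(N/Ann(N))`. -/
theorem stmt8 {F N : Type*} [Field F] [CharZero F] [NonUnitalCommRing N] [Module F N]
    [SMulCommClass F N N] [IsScalarTower F N N] [FiniteDimensional F N]
    (hAnn : Module.finrank F (annSub F N) = 1)
    (ν : ℕ) (hnil : pw F N (ν + 1) = ⊥) :
    (∀ π ρ : N →ₗ[F] N, IsAdmProj F N π → IsAdmProj F N ρ → ∀ t : F,
        IsAdmProj F N (t • π + (1 - t) • ρ)) ∧
    (∀ π : N →ₗ[F] N, IsAdmProj F N π → ∀ x : N, IsAdmProj F N (actProj F ν x π)) ∧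
    (∀ π : N →ₗ[F] N, IsAdmProj F N π → ∀ x y : N, x - y ∈ annSub F N →
        actProj F ν x π = actProj F ν y π) ∧
    (∀ π : N →ₗ[F] N, IsAdmProj F N π → ∀ x y : N,
        actProj F ν x π = actProj F ν y π → x - y ∈ annSub F N) ∧
    (∀ π ρ : N →ₗ[F] N, IsAdmProj F N π → IsAdmProj F N ρ →
        ∃ x : N, actProj F ν x π = ρ) :=
  stmt8_general hAnn ν hnil
end

section
/- Let N be an admissible algebra with admissible projection π, and S_π = {x ∈ N : π(exp₁ x) = 0}. For every s ∈ S_π, the map ρ := π ∘ M_{exp s} is again an admissible projection and S_ρ = S_π − s. -/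
/-! Write `e = exp₁ s` and `ρ = π + π ∘ M_e = π ∘ (1 + M_e)`. Since `M_e` kills
`Ann(N) = range π`, we get `ρ ∘ π = π ∘ π = π`, hence `ρ ∘ ρ = (ρ ∘ π) ∘ (1 + M_e) = ρ` and
`range ρ = range π`. For `S_ρ`, the identity `exp (x + s) = exp x · exp s` of the nilpotent
exponential in the unitization `N⁰` reads `exp₁ (x + s) = exp₁ x + exp₁ s + exp₁ x · exp₁ s`;
applying `π` and `π (exp₁ s) = 0` gives `π (exp₁ (x + s)) = ρ (exp₁ x)`. -/

open LinearMap

section Powers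

variable {F N : Type*} [Field F]

theorem npw_mem_pw [NonUnitalNonAssocRing N] [Module F N] (x : N) :
    ∀ k : ℕ, npw x k ∈ pw F N (k + 1)
  | 0 => Submodule.mem_top
  | k + 1 => Submodule.subset_span ⟨x, npw x k, npw_mem_pw x k, rfl⟩

theorem npw_eq_zero_of_pw_eq_bot [NonUnitalNonAssocRing N] [Module F N] {ν : ℕ}
    (hnil : pw F N (ν + 1) = ⊥) (x : N) : npw x ν = 0 := by
  simpa [hnil] using npw_mem_pw (F := F) x ν

variable [NonUnitalRing N] [Module F N] [SMulCommClass F N N] [IsScalarTower F N N]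

theorem Unitization.inr_npw (x : N) :
    ∀ k : ℕ, ((npw x k : N) : Unitization F N) = (x : Unitization F N) ^ (k + 1)
  | 0 => by simp [npw]
  | k + 1 => by rw [npw, Unitization.inr_mul, Unitization.inr_npw x k, ← pow_succ']

theorem Unitization.inr_exp1_eq_exp_sub_one [CharZero F] [Module ℚ (Unitization F N)]
    [IsScalarTower ℚ F (Unitization F N)] {ν : ℕ} {x : N} (hx : npw x ν = 0) :
    ((exp1 F ν x : N) : Unitization F N) = IsNilpotent.exp (x : Unitization F N) - 1 := by
  have hpow : (x : Unitization F N) ^ (ν + 1) = 0 := by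
    rw [← Unitization.inr_npw, hx, Unitization.inr_zero]
  rw [IsNilpotent.exp_eq_sum hpow, Finset.sum_range_succ', exp1]
  simp only [pow_zero, Nat.factorial_zero, Nat.cast_one, inv_one, one_smul, add_sub_cancel_right]
  refine (map_sum (Unitization.inrNonUnitalAlgHom F N) _ _).trans
    (Finset.sum_congr rfl fun k _ => ?_)
  rw [map_smul, ← Unitization.inr_npw, ← algebraMap_smul F (R := ℚ), map_inv₀, map_natCast]
  rfl

end Powers

theorem exp1_add {F N : Type*} [Field F] [CharZero F] [NonUnitalCommRing N] [Module F N]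
    [SMulCommClass F N N] [IsScalarTower F N N] {ν : ℕ} (hnil : pw F N (ν + 1) = ⊥) (x y : N) :
    exp1 F ν (x + y) = exp1 F ν x + exp1 F ν y + exp1 F ν x * exp1 F ν y := by
  let _ : Module ℚ (Unitization F N) := Module.compHom _ (algebraMap ℚ F)
  have : IsScalarTower ℚ F (Unitization F N) :=
    ⟨fun q a u => by rw [Algebra.smul_def q a, mul_smul]; rfl⟩
  have hexp (z : N) :=
    Unitization.inr_exp1_eq_exp_sub_one (F := F) (npw_eq_zero_of_pw_eq_bot hnil z)
  have hnilp (z : N) : IsNilpotent (z : Unitization F N) :=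
    ⟨ν + 1, by rw [← Unitization.inr_npw, npw_eq_zero_of_pw_eq_bot hnil, Unitization.inr_zero]⟩
  have hcomm : Commute (x : Unitization F N) y := by
    rw [Commute, SemiconjBy, ← Unitization.inr_mul, ← Unitization.inr_mul, mul_comm]
  apply Unitization.inr_injective (R := F)
  rw [Unitization.inr_add, Unitization.inr_add, Unitization.inr_mul, hexp, hexp, hexp,
    Unitization.inr_add, IsNilpotent.exp_add_of_commute hcomm (hnilp x) (hnilp y)]
  ring

section Twist

variable {F N : Type*} [Field F] [NonUnitalCommRing N] [Module F N]
  [SMulCommClass F N N] [IsScalarTower F N N] {π : N →ₗ[F] N}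

theorem mul_comp_eq_zero_of_range_le_annSub (h : range π ≤ annSub F N) (e : N) :
    mul F N e ∘ₗ π = 0 := by
  ext z
  rw [comp_apply, mul_apply', mul_comm]
  exact h (mem_range_self π z) e

theorem add_comp_mul_eq_comp (e : N) :
    π + π ∘ₗ mul F N e = π ∘ₗ (LinearMap.id + mul F N e) := by
  rw [comp_add, comp_id]

variable (hproj : π ∘ₗ π = π) (h : range π ≤ annSub F N) (e : N)
include hproj h

theorem add_comp_mul_comp_self : (π + π ∘ₗ mul F N e) ∘ₗ π = π := by
  rw [add_comp, comp_assoc π (mul F N e), mul_comp_eq_zero_of_range_le_annSub h, comp_zero,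
    add_zero, hproj]

theorem add_comp_mul_idempotent :
    (π + π ∘ₗ mul F N e) ∘ₗ (π + π ∘ₗ mul F N e) = π + π ∘ₗ mul F N e :=
  calc (π + π ∘ₗ mul F N e) ∘ₗ (π + π ∘ₗ mul F N e)
      = ((π + π ∘ₗ mul F N e) ∘ₗ π) ∘ₗ (LinearMap.id + mul F N e) := by
        rw [comp_assoc, ← add_comp_mul_eq_comp]
    _ = π + π ∘ₗ mul F N e := by rw [add_comp_mul_comp_self hproj h, add_comp_mul_eq_comp]

theorem range_add_comp_mul :
    range (π + π ∘ₗ mul F N e) = range π := by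
  refine le_antisymm ?_ ?_
  · rw [add_comp_mul_eq_comp]
    exact range_comp_le_range _ _
  · conv_lhs => rw [← add_comp_mul_comp_self hproj h e]
    exact range_comp_le_range _ _

end Twist

theorem stmt10_general {F N : Type*} [Field F] [CharZero F] [NonUnitalCommRing N] [Module F N]
    [SMulCommClass F N N] [IsScalarTower F N N]
    (ν : ℕ) (hnil : pw F N (ν + 1) = ⊥)
    (π : N →ₗ[F] N) (hproj : π ∘ₗ π = π) (hrange : LinearMap.range π = annSub F N)
    (s : N) (hs : π (exp1 F ν s) = 0) :
    (π + π ∘ₗ LinearMap.mul F N (exp1 F ν s)) ∘ₗ (π + π ∘ₗ LinearMap.mul F N (exp1 F ν s))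
        = π + π ∘ₗ LinearMap.mul F N (exp1 F ν s) ∧
    LinearMap.range (π + π ∘ₗ LinearMap.mul F N (exp1 F ν s)) = annSub F N ∧
    ∀ x : N, (π + π ∘ₗ LinearMap.mul F N (exp1 F ν s)) (exp1 F ν x) = 0
      ↔ π (exp1 F ν (x + s)) = 0 := by
  refine ⟨add_comp_mul_idempotent hproj hrange.le _,
    (range_add_comp_mul hproj hrange.le _).trans hrange, fun x => ?_⟩
  rw [exp1_add hnil, map_add, map_add, hs, add_zero, LinearMap.add_apply, comp_apply, mul_apply',
    mul_comm (exp1 F ν s)]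

/-- Let `N` be an admissible algebra, `π` an admissible projection and
`s ∈ S_π`.  Then `ρ := π ∘ M_{exp s} = π + π ∘ L_{exp₁ s}` is again an admissible
projection and `S_ρ = S_π − s`. -/
theorem stmt10 {F N : Type*} [Field F] [CharZero F] [NonUnitalCommRing N] [Module F N]
    [SMulCommClass F N N] [IsScalarTower F N N] [FiniteDimensional F N]
    (hAnn : Module.finrank F (annSub F N) = 1)
    (ν : ℕ) (hnil : pw F N (ν + 1) = ⊥)
    (π : N →ₗ[F] N) (hproj : π ∘ₗ π = π) (hrange : LinearMap.range π = annSub F N)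
    (s : N) (hs : π (exp1 F ν s) = 0) :
    (π + π ∘ₗ LinearMap.mul F N (exp1 F ν s)) ∘ₗ (π + π ∘ₗ LinearMap.mul F N (exp1 F ν s))
        = π + π ∘ₗ LinearMap.mul F N (exp1 F ν s) ∧
    LinearMap.range (π + π ∘ₗ LinearMap.mul F N (exp1 F ν s)) = annSub F N ∧
    ∀ x : N, (π + π ∘ₗ LinearMap.mul F N (exp1 F ν s)) (exp1 F ν x) = 0
      ↔ π (exp1 F ν (x + s)) = 0 :=
  stmt10_general ν hnil π hproj hrange s hs
end

section
/- Let N be an admissible algebra with pointing ω and W = ker(ω). Then the algebra W with product x∙y defined by ω(x∙y · z) interpreted via ω₂(x∙y,z) = ω₃(x,y,z) is isomorphic to the quotient algebra N/Ann(N); in particular its nil-index equals ν(N) − 1 when dim N > 1. -/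
open Module

theorem mul_foldl_mul {M : Type*} [Semigroup M] (x y : M) (l : List M) :
    x * l.foldl (· * ·) y = l.foldl (· * ·) (x * y) := by
  induction l generalizing y with
  | nil => rfl
  | cons z l ih => simp only [List.foldl_cons, ih, mul_assoc]

section LinearAlgebra

variable {K V : Type*} [Field K] [AddCommGroup V] [Module K V]

theorem Submodule.eq_span_singleton_of_finrank_eq_one {p : Submodule K V} (hp : finrank K p = 1)
    {a : V} (ha : a ∈ p) (ha0 : a ≠ 0) : p = K ∙ a := by
  have : FiniteDimensional K p := Module.finite_of_finrank_eq_succ hp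
  refine (Submodule.eq_of_le_of_finrank_le ((Submodule.span_singleton_le_iff_mem _ _).2 ha) ?_).symm
  rw [hp, finrank_span_singleton ha0]

theorem isCompl_ker_of_finrank_eq_one {p : Submodule K V} (hp : finrank K p = 1)
    {f : V →ₗ[K] K} {a : V} (ha : a ∈ p) (hfa : f a ≠ 0) : IsCompl p (LinearMap.ker f) := by
  have ha0 : a ≠ 0 := fun h => hfa (by simp [h])
  rw [Submodule.eq_span_singleton_of_finrank_eq_one hp ha ha0]
  exact ⟨((Submodule.disjoint_span_singleton' ha0).2 hfa).symm,
    codisjoint_iff.2 (LinearMap.span_singleton_sup_ker_eq_top f hfa)⟩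

end LinearAlgebra

section Powers

variable {F N : Type*} [Field F] [NonUnitalNonAssocRing N] [Module F N]

theorem mul_mem_pw_succ {k : ℕ} (x : N) {y : N} (hy : y ∈ pw F N k) : x * y ∈ pw F N (k + 1) :=
  match k with
  | 0 => Submodule.mem_top
  | _ + 1 => Submodule.subset_span ⟨x, y, hy, rfl⟩

theorem pw_succ_le : ∀ k : ℕ, pw F N (k + 1) ≤ pw F N k
  | 0 => le_rfl
  | 1 => le_top
  | k + 2 => Submodule.span_le.2 <| by
    rintro _ ⟨x, y, hy, rfl⟩
    exact mul_mem_pw_succ x (pw_succ_le (k + 1) hy)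

theorem pw_antitone : Antitone (pw F N) :=
  antitone_nat_of_succ_le pw_succ_le

end Powers

section Commutative

variable {F N : Type*} [Field F] [NonUnitalCommRing N] [Module F N]

theorem foldl_mul_mem_pw {k : ℕ} {x : N} (hx : x ∈ pw F N k) (l : List N) :
    l.foldl (· * ·) x ∈ pw F N (k + l.length) := by
  induction l generalizing k x with
  | nil => exact hx
  | cons y l ih =>
    rw [List.foldl_cons, List.length_cons, ← add_assoc, add_right_comm]
    exact ih (by rw [mul_comm]; exact mul_mem_pw_succ y hx)

theorem pw_succ_le_span_foldl [SMulCommClass F N N] (k : ℕ) :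
    pw F N (k + 1) ≤
      Submodule.span F {z | ∃ (x : N) (l : List N), l.length = k ∧ l.foldl (· * ·) x = z} := by
  induction k with
  | zero => exact fun n _ => Submodule.subset_span ⟨n, [], rfl, rfl⟩
  | succ k ih =>
    refine Submodule.span_le.2 ?_
    rintro _ ⟨x, y, hy, rfl⟩
    have hxy := Submodule.mem_map_of_mem (f := LinearMap.mulLeft F x) (ih hy)
    rw [Submodule.map_span] at hxy
    refine Submodule.span_mono ?_ hxy
    rintro _ ⟨_, ⟨x', l, hl, rfl⟩, rfl⟩
    exact ⟨x, x' :: l, by rw [List.length_cons, hl], (mul_foldl_mul x x' l).symm⟩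

end Commutative

section Annihilator

variable {F N : Type*} [Field F] [NonUnitalCommRing N] [Module F N]
  [SMulCommClass F N N] [IsScalarTower F N N]

theorem pw_le_annSub_iff {k : ℕ} : pw F N (k + 1) ≤ annSub F N ↔ pw F N (k + 2) = ⊥ := by
  constructor
  · intro h
    refine le_bot_iff.1 (Submodule.span_le.2 ?_)
    rintro _ ⟨x, y, hy, rfl⟩
    rw [SetLike.mem_coe, mul_comm, h hy x]
    exact zero_mem _
  · intro h x hx y
    rw [mul_comm, ← Submodule.mem_bot F, ← h]
    exact mul_mem_pw_succ y hx

theorem exists_foldl_mul_not_mem_annSub {k : ℕ} (hk : pw F N (k + 2) ≠ ⊥) :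
    ∃ (x : N) (l : List N), l.length = k ∧ l.foldl (· * ·) x ∉ annSub F N := by
  by_contra! h
  refine hk (pw_le_annSub_iff.1 ((pw_succ_le_span_foldl k).trans (Submodule.span_le.2 ?_)))
  rintro _ ⟨x, l, hl, rfl⟩
  exact h x l hl

theorem two_le_of_one_lt_finrank (hAnn : finrank F (annSub F N) = 1)
    (hdim : 1 < finrank F N) {ν : ℕ} (hnil : pw F N (ν + 1) = ⊥) : 2 ≤ ν := by
  by_contra! hν
  have hpw1 : pw F N 1 ≤ annSub F N :=
    pw_le_annSub_iff.2 (le_bot_iff.1 ((pw_antitone (by omega)).trans hnil.le))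
  have htop : annSub F N = ⊤ := top_le_iff.1 hpw1
  rw [htop, finrank_top] at hAnn
  omega

theorem exists_mul_mem_annSub_ne_zero {ν : ℕ} (hnil : pw F N (ν + 1) = ⊥) {n : N}
    (hn : n ∉ annSub F N) : ∃ w : N, n * w ∈ annSub F N ∧ n * w ≠ 0 := by
  suffices h : ∀ k, ∀ n ∈ pw F N (ν + 1 - k), n ∉ annSub F N →
      ∃ w : N, n * w ∈ annSub F N ∧ n * w ≠ 0 from h (ν + 1) n (by simp [pw]) hn
  intro k
  induction k with
  | zero =>
    intro n hn hnA
    rw [Nat.sub_zero, hnil, Submodule.mem_bot] at hn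
    exact absurd (hn ▸ zero_mem _) hnA
  | succ k ih =>
    intro n hn hnA
    obtain ⟨z, hz⟩ : ∃ z, n * z ≠ 0 := not_forall.1 hnA
    by_cases hzA : n * z ∈ annSub F N
    · exact ⟨z, hzA, hz⟩
    have hz_mem : n * z ∈ pw F N (ν + 1 - k) :=
      pw_antitone (by omega) (mul_comm z n ▸ mul_mem_pw_succ z hn)
    obtain ⟨w, hw⟩ := ih (n * z) hz_mem hzA
    exact ⟨z * w, by rwa [← mul_assoc]⟩

theorem mem_annSub_of_forall_apply_mul_eq_zero {ν : ℕ} (hnil : pw F N (ν + 1) = ⊥)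
    {ω : N →ₗ[F] F} (hω : Disjoint (annSub F N) (LinearMap.ker ω)) {d : N}
    (hd : ∀ z, ω (d * z) = 0) : d ∈ annSub F N := by
  by_contra hdA
  obtain ⟨w, hwA, hw0⟩ := exists_mul_mem_annSub_ne_zero hnil hdA
  exact hw0 (Submodule.disjoint_def.1 hω _ hwA (hd w))

theorem mul_eq_mul_of_smodEq_annSub {x x' y y' : N} (hx : x ≡ x' [SMOD annSub F N])
    (hy : y ≡ y' [SMOD annSub F N]) : x * y = x' * y' := by
  have hxy : (x - x') * y = 0 := SModEq.sub_mem.1 hx y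
  have hyx : (y - y') * x' = 0 := SModEq.sub_mem.1 hy x'
  rw [sub_mul, sub_eq_zero] at hxy hyx
  rw [hxy, mul_comm, hyx, mul_comm]

theorem foldl_mul_smodEq_annSub {x x' : N} {l l' : List N} (hx : x ≡ x' [SMOD annSub F N])
    (hl : List.Forall₂ (fun y y' => y ≡ y' [SMOD annSub F N]) l l') :
    l.foldl (· * ·) x ≡ l'.foldl (· * ·) x' [SMOD annSub F N] := by
  induction hl generalizing x x' with
  | nil => exact hx
  | cons hy _ ih =>
    simp only [List.foldl_cons, mul_eq_mul_of_smodEq_annSub hx hy]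
    exact ih SModEq.rfl

theorem foldl_smodEq_foldl_mul {W : Submodule F N} {m : W → W → W}
    (hmul : ∀ x y : W, (m x y : N) ≡ x * y [SMOD annSub F N]) (x : W) (l : List W) :
    ((l.foldl m x : W) : N) ≡ (l.map ((↑) : W → N)).foldl (· * ·) (x : N) [SMOD annSub F N] := by
  induction l generalizing x with
  | nil => exact SModEq.rfl
  | cons y l ih =>
    rw [List.foldl_cons, List.map_cons, List.foldl_cons]
    refine (ih (m x y)).trans (foldl_mul_smodEq_annSub (hmul x y) ?_)
    exact List.forall₂_same.2 fun _ _ => SModEq.rfl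

theorem smodEq_mul_of_apply_mul_eq {ν : ℕ} (hnil : pw F N (ν + 1) = ⊥) {ω : N →ₗ[F] F}
    (hω : IsCompl (annSub F N) (LinearMap.ker ω))
    {m : LinearMap.ker ω → LinearMap.ker ω → LinearMap.ker ω}
    (hm : ∀ x y z : LinearMap.ker ω, ω ((m x y : N) * z) = ω (((x : N) * y) * z))
    (x y : LinearMap.ker ω) : (m x y : N) ≡ x * y [SMOD annSub F N] := by
  refine SModEq.sub_mem.2 (mem_annSub_of_forall_apply_mul_eq_zero hnil hω.disjoint fun z => ?_)
  obtain ⟨a, ha, w, hw, rfl⟩ :=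
    Submodule.mem_sup.1 (hω.codisjoint.eq_top ▸ Submodule.mem_top (x := z))
  rw [mul_add, mul_comm _ a, ha, zero_add, sub_mul, map_sub, hm x y ⟨w, hw⟩, sub_self]

end Annihilator

theorem Submodule.bijective_quotient_mk_of_isCompl {R E : Type*} [Ring R] [AddCommGroup E]
    [Module R E] {p q : Submodule R E} (h : IsCompl p q) :
    Function.Bijective (fun x : q => (Submodule.Quotient.mk (x : E) : E ⧸ p)) := by
  convert (Submodule.quotientEquivOfIsCompl p q h).symm.bijective using 1
  funext x
  exact (Submodule.quotientEquivOfIsCompl_symm_apply p q h x).symm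

section Pointed

variable {F N : Type*} [Field F] [NonUnitalCommRing N] [Module F N]
  [SMulCommClass F N N] [IsScalarTower F N N] {ω : N →ₗ[F] F}
  {m : LinearMap.ker ω → LinearMap.ker ω → LinearMap.ker ω}

theorem foldl_eq_zero_of_pw_eq_bot (hω : IsCompl (annSub F N) (LinearMap.ker ω))
    (hmul : ∀ x y : LinearMap.ker ω, (m x y : N) ≡ x * y [SMOD annSub F N])
    {k : ℕ} (hnil : pw F N (k + 3) = ⊥) (x : LinearMap.ker ω)
    (l : List (LinearMap.ker ω)) (hl : l.length = k + 1) : l.foldl m x = 0 := by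
  have hpw : (l.map Subtype.val).foldl (· * ·) (x : N) ∈ pw F N (k + 2) := by
    have h := foldl_mul_mem_pw (F := F) (k := 1) (Submodule.mem_top (x := (x : N)))
      (l.map Subtype.val)
    rwa [List.length_map, hl, add_comm] at h
  have hA : ((l.foldl m x : LinearMap.ker ω) : N) ∈ annSub F N := SModEq.zero.1 <|
    (foldl_smodEq_foldl_mul hmul x l).trans (SModEq.zero.2 (pw_le_annSub_iff.2 hnil hpw))
  exact Subtype.ext (Submodule.disjoint_def.1 hω.disjoint _ hA (l.foldl m x).2)

theorem exists_foldl_ne_zero_of_pw_ne_bot (hω : IsCompl (annSub F N) (LinearMap.ker ω))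
    (hmul : ∀ x y : LinearMap.ker ω, (m x y : N) ≡ x * y [SMOD annSub F N])
    {k : ℕ} (hne : pw F N (k + 2) ≠ ⊥) :
    ∃ (x : LinearMap.ker ω) (l : List (LinearMap.ker ω)), l.length = k ∧ l.foldl m x ≠ 0 := by
  obtain ⟨x, l, hl, hxl⟩ := exists_foldl_mul_not_mem_annSub hne
  choose lift hlift using fun n : N =>
    (Submodule.bijective_quotient_mk_of_isCompl hω).2 (Submodule.Quotient.mk n)
  refine ⟨lift x, l.map lift, by rw [List.length_map, hl], fun h0 => hxl ?_⟩
  have hlift_l : List.Forall₂ (fun y y' => y ≡ y' [SMOD annSub F N])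
      ((l.map lift).map Subtype.val) l :=
    List.forall₂_map_left_iff.2 <| List.forall₂_map_left_iff.2 <|
      List.forall₂_same.2 fun y _ => hlift y
  have h := (foldl_smodEq_foldl_mul hmul (lift x) (l.map lift)).trans
    (foldl_mul_smodEq_annSub (hlift x) hlift_l)
  rw [h0] at h
  exact SModEq.zero.1 h.symm

end Pointed

theorem stmt14_general {F N : Type*} [Field F] [NonUnitalCommRing N] [Module F N]
    [SMulCommClass F N N] [IsScalarTower F N N]
    (hAnn : Module.finrank F (annSub F N) = 1)
    (ν : ℕ) (hnil : pw F N (ν + 1) = ⊥) (hne : pw F N ν ≠ ⊥)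
    (ω : N →ₗ[F] F) (hω : ∃ a ∈ annSub F N, ω a ≠ 0)
    (m : ↥(LinearMap.ker ω) → ↥(LinearMap.ker ω) → ↥(LinearMap.ker ω))
    (hm : ∀ x y z : ↥(LinearMap.ker ω), ω ((m x y : N) * z) = ω (((x : N) * y) * z)) :
    Function.Bijective
      (fun x : ↥(LinearMap.ker ω) => (Submodule.Quotient.mk (x : N) : N ⧸ annSub F N)) ∧
    (∀ x y : ↥(LinearMap.ker ω),
      (Submodule.Quotient.mk ((m x y : N)) : N ⧸ annSub F N)
        = Submodule.Quotient.mk ((x : N) * y)) ∧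
    (1 < Module.finrank F N →
      (∀ (x : ↥(LinearMap.ker ω)) (l : List ↥(LinearMap.ker ω)),
          l.length = ν - 1 → l.foldl m x = 0) ∧
      (∃ (x : ↥(LinearMap.ker ω)) (l : List ↥(LinearMap.ker ω)),
          l.length = ν - 2 ∧ l.foldl m x ≠ 0)) := by
  obtain ⟨a, ha, hωa⟩ := hω
  have hcompl := isCompl_ker_of_finrank_eq_one hAnn ha hωa
  have hmul := smodEq_mul_of_apply_mul_eq hnil hcompl hm
  refine ⟨Submodule.bijective_quotient_mk_of_isCompl hcompl, hmul, fun hdim => ?_⟩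
  obtain ⟨k, rfl⟩ : ∃ k, ν = k + 2 :=
    ⟨ν - 2, by have := two_le_of_one_lt_finrank hAnn hdim hnil; omega⟩
  simp only [Nat.add_sub_cancel, show k + 2 - 1 = k + 1 by omega]
  exact ⟨foldl_eq_zero_of_pw_eq_bot hcompl hmul hnil,
    exists_foldl_ne_zero_of_pw_ne_bot hcompl hmul hne⟩

/-- Let `N` be an admissible algebra of nil-index `ν` with pointing `ω`,
`W = ker ω`, and let `m : W → W → W` be the product `x∙y` characterized by
`ω₂(x∙y, z) = ω₃(x,y,z)`, i.e. `ω((x∙y)·z) = ω((x·y)·z)` for all `z ∈ W`.  Then `W` with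
this product is isomorphic to `N/Ann(N)` (via `x ↦ x + Ann(N)`), and if `dim N > 1` the
nil-index of `(W, ∙)` equals `ν − 1`: every `∙`-product of `ν` elements of `W` vanishes
while some `∙`-product of `ν − 1` elements does not. -/
theorem stmt14 {F N : Type*} [Field F] [CharZero F] [NonUnitalCommRing N] [Module F N]
    [SMulCommClass F N N] [IsScalarTower F N N] [FiniteDimensional F N]
    (hAnn : Module.finrank F (annSub F N) = 1)
    (ν : ℕ) (hnil : pw F N (ν + 1) = ⊥) (hne : pw F N ν ≠ ⊥)
    (ω : N →ₗ[F] F) (hω : ∃ a ∈ annSub F N, ω a ≠ 0)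
    (m : ↥(LinearMap.ker ω) → ↥(LinearMap.ker ω) → ↥(LinearMap.ker ω))
    (hm : ∀ x y z : ↥(LinearMap.ker ω), ω ((m x y : N) * z) = ω (((x : N) * y) * z)) :
    Function.Bijective
      (fun x : ↥(LinearMap.ker ω) => (Submodule.Quotient.mk (x : N) : N ⧸ annSub F N)) ∧
    (∀ x y : ↥(LinearMap.ker ω),
      (Submodule.Quotient.mk ((m x y : N)) : N ⧸ annSub F N)
        = Submodule.Quotient.mk ((x : N) * y)) ∧
    (1 < Module.finrank F N →
      (∀ (x : ↥(LinearMap.ker ω)) (l : List ↥(LinearMap.ker ω)),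
          l.length = ν - 1 → l.foldl m x = 0) ∧
      (∃ (x : ↥(LinearMap.ker ω)) (l : List ↥(LinearMap.ker ω)),
          l.length = ν - 2 ∧ l.foldl m x ≠ 0)) :=
  stmt14_general hAnn ν hnil hne ω hω m hm
end
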